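/- arXiv:1509.00661 — 4 statements merged into one kernel-verified Lean document; each statement's English description precedes it below -/
import Mathlib

section
/- Let X, Y be Banach spaces, T : X → Y bounded with a_k(T) → 0, and ε > 0. Define ν₀(ε) = max{k ∈ ℕ : a_k(T) ≥ ε} (and 0 if no such k exists) and μ₀(ε) = max{dim S : S a finite-dimensional subspace of X with sup_{u∈S∖{0}} ‖u‖_X/‖Tu‖_Y ≤ 1/ε}, T injective. Then μ₀(ε) ≤ ν₀(ε). -/
/-- The `k`-th approximation number of a bounded linear operator:
`a_k(T) = inf { ‖T - P‖ : rank P < k }`. -/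
noncomputable def approxNumber {X Y : Type*} [NormedAddCommGroup X] [NormedSpace ℝ X]
    [NormedAddCommGroup Y] [NormedSpace ℝ Y] (k : ℕ) (T : X →L[ℝ] Y) : ℝ :=
  sInf {c : ℝ | ∃ P : X →L[ℝ] Y, FiniteDimensional ℝ (LinearMap.range (P : X →ₗ[ℝ] Y)) ∧
      Module.finrank ℝ (LinearMap.range (P : X →ₗ[ℝ] Y)) < k ∧ c = ‖T - P‖}

/-- `ν₀(ε) = max {k ∈ ℕ, k ≥ 1 : a_k(T) ≥ ε}`, as an extended natural number
(`0` if no such `k` exists). -/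
noncomputable def nu0 {X Y : Type*} [NormedAddCommGroup X] [NormedSpace ℝ X]
    [NormedAddCommGroup Y] [NormedSpace ℝ Y] (T : X →L[ℝ] Y) (ε : ℝ) : ℕ∞ :=
  sSup {d : ℕ∞ | ∃ k : ℕ, d = k ∧ 1 ≤ k ∧ ε ≤ approxNumber k T}

/-- `μ₀(ε)`: the maximal dimension of a finite-dimensional subspace `S ⊆ X` with
`sup_{u ∈ S \ {0}} ‖u‖/‖Tu‖ ≤ 1/ε`, i.e. `‖u‖ ≤ ε⁻¹ ‖T u‖` for all `u ∈ S`. -/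
noncomputable def mu0 {X Y : Type*} [NormedAddCommGroup X] [NormedSpace ℝ X]
    [NormedAddCommGroup Y] [NormedSpace ℝ Y] (T : X →L[ℝ] Y) (ε : ℝ) : ℕ∞ :=
  sSup {d : ℕ∞ | ∃ S : Submodule ℝ X, FiniteDimensional ℝ S ∧
      d = (Module.finrank ℝ S : ℕ∞) ∧ ∀ u ∈ S, ‖u‖ ≤ ε⁻¹ * ‖T u‖}

lemma key_lemma {X Y : Type*} [NormedAddCommGroup X] [NormedSpace ℝ X]
    [NormedAddCommGroup Y] [NormedSpace ℝ Y] (T : X →L[ℝ] Y) (ε : ℝ) (hε : 0 < ε)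
    (S : Submodule ℝ X) [FiniteDimensional ℝ S] (hS : ∀ u ∈ S, ‖u‖ ≤ ε⁻¹ * ‖T u‖)
    (hn : 1 ≤ Module.finrank ℝ S) :
    ε ≤ approxNumber (Module.finrank ℝ S) T := by
  apply le_csInf
  · have h0 : LinearMap.range ((0 : X →L[ℝ] Y) : X →ₗ[ℝ] Y) = ⊥ := by
      ext x; simp [eq_comm]
    refine ⟨‖T - 0‖, 0, ?_, ?_, rfl⟩
    · rw [h0]; infer_instance
    · rw [h0, finrank_bot]; omega
  · rintro c ⟨P, hfin, hlt, rfl⟩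
    set g : S →ₗ[ℝ] Y := (P : X →ₗ[ℝ] Y).comp S.subtype with hg
    haveI : FiniteDimensional ℝ (LinearMap.range (P : X →ₗ[ℝ] Y)) := hfin
    have hrange : LinearMap.range g ≤ LinearMap.range (P : X →ₗ[ℝ] Y) :=
      LinearMap.range_comp_le_range _ _
    have hfr : Module.finrank ℝ (LinearMap.range g) < Module.finrank ℝ S :=
      lt_of_le_of_lt (Submodule.finrank_mono hrange) hlt
    have hker : LinearMap.ker g ≠ ⊥ := by
      intro h
      have h2 := LinearMap.finrank_range_add_finrank_ker g
      rw [h, finrank_bot, add_zero] at h2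
      omega
    obtain ⟨u, hu, hu0⟩ := Submodule.exists_mem_ne_zero_of_ne_bot hker
    have hPu : P (u : X) = 0 := hu
    have hux : (u : X) ≠ 0 := fun h => hu0 (Subtype.ext h)
    have hnorm : 0 < ‖(u : X)‖ := norm_pos_iff.mpr hux
    have h1 : ε * ‖(u : X)‖ ≤ ‖T (u : X)‖ := by
      have := hS u u.2
      calc ε * ‖(u : X)‖ ≤ ε * (ε⁻¹ * ‖T (u : X)‖) := by
            exact mul_le_mul_of_nonneg_left this hε.le
        _ = ‖T (u : X)‖ := by field_simp
    have h2 : ‖T (u : X)‖ = ‖(T - P) (u : X)‖ := by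
      simp [ContinuousLinearMap.sub_apply, hPu]
    have h3 : ‖(T - P) (u : X)‖ ≤ ‖T - P‖ * ‖(u : X)‖ := (T - P).le_opNorm _
    have := h1.trans (h2.le.trans h3)
    exact le_of_mul_le_mul_right this hnorm

/-- If `T` is a bounded injective operator between Banach spaces with `a_k(T) → 0`,
then `μ₀(ε) ≤ ν₀(ε)` for every `ε > 0`. -/
theorem stmt1 {X Y : Type*} [NormedAddCommGroup X] [NormedSpace ℝ X] [CompleteSpace X]
    [NormedAddCommGroup Y] [NormedSpace ℝ Y] [CompleteSpace Y]
    (T : X →L[ℝ] Y) (hinj : Function.Injective T)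
    (htend : Filter.Tendsto (fun k => approxNumber k T) Filter.atTop (nhds 0))
    (ε : ℝ) (hε : 0 < ε) :
    mu0 T ε ≤ nu0 T ε := by
  apply sSup_le
  rintro d ⟨S, hSfin, rfl, hS⟩
  by_cases h0 : Module.finrank ℝ S = 0
  · rw [h0]
    exact bot_le
  · exact le_sSup ⟨Module.finrank ℝ S, rfl, by omega,
      key_lemma T ε hε S hS (by omega)⟩
end

section
/- Let Ω ⊂ ℝⁿ be a domain decomposed as the interior of the union of closures of finitely many pairwise disjoint subdomains Ω₁,…,Ω_J, and consider the embeddings id_Ω : E → L_p(Ω) and id_{Ω_j} : E_j → L_p(Ω_j) where E, E_j are Banach function spaces whose p-th power norms add over the disjoint pieces (‖f‖_E^p = Σ_j ‖f|_{Ω_j}‖_{E_j}^p and similarly for L_p). Then for every ε > 0, ν₀(ε, Ω) ≤ Σ_{j=1}^J ν₀(ε, Ω_j), where ν₀(ε, Ω) = max{k : a_k(id_Ω) ≥ ε}. -/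
section aux
variable {X Y : Type*} [NormedAddCommGroup X] [NormedSpace ℝ X]
    [NormedAddCommGroup Y] [NormedSpace ℝ Y]

lemma approxSet_bddBelow (k : ℕ) (T : X →L[ℝ] Y) :
    BddBelow {c : ℝ | ∃ P : X →L[ℝ] Y, FiniteDimensional ℝ (LinearMap.range (P : X →ₗ[ℝ] Y)) ∧
      Module.finrank ℝ (LinearMap.range (P : X →ₗ[ℝ] Y)) < k ∧ c = ‖T - P‖} := by
  refine ⟨0, fun c hc => ?_⟩
  obtain ⟨P, _, _, rfl⟩ := hc
  exact norm_nonneg _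

lemma range_zero_clm : LinearMap.range ((0 : X →L[ℝ] Y) : X →ₗ[ℝ] Y) = ⊥ := by
  ext y; simp [LinearMap.mem_range, eq_comm]

lemma approxSet_nonempty {k : ℕ} (hk : 1 ≤ k) (T : X →L[ℝ] Y) :
    Set.Nonempty {c : ℝ | ∃ P : X →L[ℝ] Y, FiniteDimensional ℝ (LinearMap.range (P : X →ₗ[ℝ] Y)) ∧
      Module.finrank ℝ (LinearMap.range (P : X →ₗ[ℝ] Y)) < k ∧ c = ‖T - P‖} := by
  refine ⟨‖T - 0‖, 0, ?_, ?_, rfl⟩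
  · rw [range_zero_clm]; infer_instance
  · rw [range_zero_clm]; simpa using Nat.one_le_iff_ne_zero.mp hk |>.bot_lt

lemma approxNumber_le_norm_sub {k : ℕ} (T P : X →L[ℝ] Y)
    (h1 : FiniteDimensional ℝ (LinearMap.range (P : X →ₗ[ℝ] Y)))
    (h2 : Module.finrank ℝ (LinearMap.range (P : X →ₗ[ℝ] Y)) < k) :
    approxNumber k T ≤ ‖T - P‖ :=
  csInf_le (approxSet_bddBelow k T) ⟨P, h1, h2, rfl⟩

lemma approxNumber_antitone {k l : ℕ} (hk : 1 ≤ k) (hkl : k ≤ l) (T : X →L[ℝ] Y) :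
    approxNumber l T ≤ approxNumber k T := by
  refine csInf_le_csInf (approxSet_bddBelow l T) (approxSet_nonempty hk T) ?_
  rintro c ⟨P, h1, h2, rfl⟩
  exact ⟨P, h1, h2.trans_le hkl, rfl⟩

lemma exists_of_approxNumber_lt {k : ℕ} (hk : 1 ≤ k) {T : X →L[ℝ] Y} {ε : ℝ}
    (h : approxNumber k T < ε) :
    ∃ P : X →L[ℝ] Y, FiniteDimensional ℝ (LinearMap.range (P : X →ₗ[ℝ] Y)) ∧
      Module.finrank ℝ (LinearMap.range (P : X →ₗ[ℝ] Y)) < k ∧ ‖T - P‖ < ε := by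
  obtain ⟨c, hc, hcε⟩ := exists_lt_of_csInf_lt (approxSet_nonempty hk T) h
  obtain ⟨P, h1, h2, rfl⟩ := hc
  exact ⟨P, h1, h2, hcε⟩

lemma fd_finset_sup {ι : Type*} (s : Finset ι) (Q : ι → Submodule ℝ Y)
    (h : ∀ i, FiniteDimensional ℝ (Q i)) :
    FiniteDimensional ℝ ↥(s.sup Q) ∧
      Module.finrank ℝ ↥(s.sup Q) ≤ ∑ i ∈ s, Module.finrank ℝ (Q i) := by
  classical
  induction s using Finset.induction with
  | empty => exact ⟨by rw [Finset.sup_empty]; infer_instance, by simp [Finset.sup_empty]⟩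
  | @insert a s ha ih =>
      haveI := ih.1
      haveI := h a
      rw [Finset.sup_insert, Finset.sum_insert ha]
      refine ⟨inferInstance, ?_⟩
      exact (Submodule.finrank_add_le_finrank_add_finrank _ _).trans
        (Nat.add_le_add_left ih.2 _)

end aux

set_option maxHeartbeats 1000000 in
/-- Subadditivity of `ν₀` under a disjoint decomposition `Ω = (∪_j Ω̄_j)°`: abstractly,
`E` and `L` are Banach (function) spaces which decompose via restriction operators
`RE j : E → E j` and `RL j : L → L j` whose norms add `p`-th-power-wise, the embeddings
`T : E → L` and `Tj j : E j → L j` are compatible with restriction, and elements of the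
pieces `L j` can be glued back (extension by zero `ιL`).  Then
`ν₀(ε, Ω) ≤ Σ_{j=1}^J ν₀(ε, Ω_j)`. -/
theorem stmt2 {J : ℕ}
    {E L : Type*} [NormedAddCommGroup E] [NormedSpace ℝ E] [CompleteSpace E]
    [NormedAddCommGroup L] [NormedSpace ℝ L] [CompleteSpace L]
    {Ej Lj : Fin J → Type*}
    [∀ j, NormedAddCommGroup (Ej j)] [∀ j, NormedSpace ℝ (Ej j)] [∀ j, CompleteSpace (Ej j)]
    [∀ j, NormedAddCommGroup (Lj j)] [∀ j, NormedSpace ℝ (Lj j)] [∀ j, CompleteSpace (Lj j)]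
    (p : ℝ) (hp : 1 ≤ p)
    (T : E →L[ℝ] L) (Tj : ∀ j, Ej j →L[ℝ] Lj j)
    (RE : ∀ j, E →L[ℝ] Ej j) (RL : ∀ j, L →L[ℝ] Lj j) (ιL : ∀ j, Lj j →L[ℝ] L)
    (hE : ∀ f : E, ‖f‖ ^ p = ∑ j, ‖RE j f‖ ^ p)
    (hL : ∀ g : L, ‖g‖ ^ p = ∑ j, ‖RL j g‖ ^ p)
    (hcomm : ∀ j (f : E), RL j (T f) = Tj j (RE j f))
    (hglue : ∀ (g : ∀ j, Lj j) (j : Fin J), RL j (∑ i, ιL i (g i)) = g j)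
    (htend : Filter.Tendsto (fun k => approxNumber k T) Filter.atTop (nhds 0))
    (ε : ℝ) (hε : 0 < ε) :
    nu0 T ε ≤ ∑ j, nu0 (Tj j) ε := by
  by_cases htop : ∑ j, nu0 (Tj j) ε = ⊤
  · rw [htop]; exact le_top
  have hfin : ∀ j, nu0 (Tj j) ε ≠ ⊤ := by
    intro j h
    exact htop (top_le_iff.mp (h ▸ Finset.single_le_sum
      (fun i _ => (zero_le : 0 ≤ nu0 (Tj i) ε)) (Finset.mem_univ j)))
  set n : Fin J → ℕ := fun j => (nu0 (Tj j) ε).toNat with hn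
  have hnj : ∀ j, (n j : ℕ∞) = nu0 (Tj j) ε := fun j => ENat.coe_toNat (hfin j)
  have hpos : 0 < p := lt_of_lt_of_le one_pos hp
  -- each a_{n j + 1}(Tj j) < ε
  have hlt : ∀ j, approxNumber (n j + 1) (Tj j) < ε := by
    intro j
    by_contra h
    push_neg at h
    have hmem : ((n j + 1 : ℕ) : ℕ∞) ∈
        {d : ℕ∞ | ∃ k : ℕ, d = k ∧ 1 ≤ k ∧ ε ≤ approxNumber k (Tj j)} :=
      ⟨n j + 1, rfl, Nat.le_add_left 1 (n j), h⟩
    have := le_sSup hmem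
    rw [show sSup {d : ℕ∞ | ∃ k : ℕ, d = k ∧ 1 ≤ k ∧ ε ≤ approxNumber k (Tj j)}
        = nu0 (Tj j) ε from rfl, ← hnj j] at this
    exact absurd (by exact_mod_cast this) (by omega)
  -- choose finite rank approximants
  have hPj : ∀ j, ∃ P : Ej j →L[ℝ] Lj j, FiniteDimensional ℝ (LinearMap.range (P : Ej j →ₗ[ℝ] Lj j)) ∧
      Module.finrank ℝ (LinearMap.range (P : Ej j →ₗ[ℝ] Lj j)) < n j + 1 ∧ ‖Tj j - P‖ < ε :=
    fun j => exists_of_approxNumber_lt (Nat.le_add_left 1 (n j)) (hlt j)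
  choose Pj hPj1 hPj2 hPj3 using hPj
  -- uniform bound m < ε
  set m : NNReal := Finset.univ.sup fun j => ‖Tj j - Pj j‖₊ with hm
  have hmlt : (m : ℝ) < ε := by
    have hε' : (⊥ : NNReal) < ⟨ε, hε.le⟩ := by
      simp only [bot_eq_zero']
      exact_mod_cast hε
    have : m < ⟨ε, hε.le⟩ := by
      rw [hm, Finset.sup_lt_iff hε']
      intro j _
      exact_mod_cast hPj3 j
    exact_mod_cast this
  have hmj : ∀ j, ‖Tj j - Pj j‖ ≤ (m : ℝ) := by
    intro j
    exact_mod_cast Finset.le_sup (f := fun j => ‖Tj j - Pj j‖₊) (Finset.mem_univ j)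
  -- glue
  set P : E →L[ℝ] L := ∑ j, (ιL j).comp ((Pj j).comp (RE j)) with hP
  have hPapp : ∀ f : E, P f = ∑ i, ιL i (Pj i (RE i f)) := by
    intro f
    simp [hP, ContinuousLinearMap.sum_apply]
  have hRLP : ∀ j (f : E), RL j (T f - P f) = (Tj j - Pj j) (RE j f) := by
    intro j f
    rw [map_sub, hcomm, hPapp, hglue (fun i => Pj i (RE i f)) j]
    simp
  -- norm estimate
  have hnorm : ∀ f : E, ‖T f - P f‖ ≤ (m : ℝ) * ‖f‖ := by
    intro f
    have key : ‖T f - P f‖ ^ p ≤ ((m : ℝ) * ‖f‖) ^ p := by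
      rw [hL (T f - P f)]
      have hb : ∀ j ∈ Finset.univ, ‖RL j (T f - P f)‖ ^ p ≤ (m : ℝ) ^ p * ‖RE j f‖ ^ p := by
        intro j _
        rw [hRLP j f, ← Real.mul_rpow m.coe_nonneg (norm_nonneg _)]
        exact Real.rpow_le_rpow (norm_nonneg _)
          (((Tj j - Pj j).le_opNorm (RE j f)).trans
            (mul_le_mul_of_nonneg_right (hmj j) (norm_nonneg _))) hpos.le
      calc ∑ j, ‖RL j (T f - P f)‖ ^ p ≤ ∑ j, (m : ℝ) ^ p * ‖RE j f‖ ^ p :=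
            Finset.sum_le_sum hb
        _ = (m : ℝ) ^ p * ∑ j, ‖RE j f‖ ^ p := by rw [Finset.mul_sum]
        _ = (m : ℝ) ^ p * ‖f‖ ^ p := by rw [← hE f]
        _ = ((m : ℝ) * ‖f‖) ^ p := (Real.mul_rpow m.coe_nonneg (norm_nonneg _)).symm
    exact (Real.rpow_le_rpow_iff (norm_nonneg _)
      (mul_nonneg m.coe_nonneg (norm_nonneg _)) hpos).mp key
  have hTP : ‖T - P‖ ≤ (m : ℝ) :=
    ContinuousLinearMap.opNorm_le_bound _ m.coe_nonneg (fun f => by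
      simpa using hnorm f)
  -- rank estimate
  set N : ℕ := ∑ j, n j with hN
  set M : Submodule ℝ L :=
    Finset.univ.sup (fun j => (LinearMap.range (Pj j : Ej j →ₗ[ℝ] Lj j)).map (ιL j).toLinearMap) with hM
  have hQfd : ∀ j, FiniteDimensional ℝ
      (((LinearMap.range (Pj j : Ej j →ₗ[ℝ] Lj j)).map (ιL j).toLinearMap) : Submodule ℝ L) := by
    intro j
    haveI := hPj1 j
    exact Module.Finite.map _ _
  obtain ⟨hMfd, hMrank⟩ := fd_finset_sup Finset.univ
    (fun j => (LinearMap.range (Pj j : Ej j →ₗ[ℝ] Lj j)).map (ιL j).toLinearMap) hQfd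
  have hrange : LinearMap.range (P : E →ₗ[ℝ] L) ≤ M := by
    rintro y ⟨f, rfl⟩
    rw [ContinuousLinearMap.coe_coe, hPapp f]
    refine Submodule.sum_mem M (fun i _ => ?_)
    refine Finset.le_sup (f := fun j => (LinearMap.range (Pj j : Ej j →ₗ[ℝ] Lj j)).map (ιL j).toLinearMap)
      (Finset.mem_univ i) ?_
    exact ⟨Pj i (RE i f), ⟨RE i f, rfl⟩, rfl⟩
  haveI hMfd' : FiniteDimensional ℝ M := hMfd
  haveI hPfd : FiniteDimensional ℝ (LinearMap.range (P : E →ₗ[ℝ] L)) :=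
    Submodule.finiteDimensional_of_le hrange
  have hPrank : Module.finrank ℝ (LinearMap.range (P : E →ₗ[ℝ] L)) ≤ N := by
    refine (Submodule.finrank_mono hrange).trans (hMrank.trans ?_)
    refine Finset.sum_le_sum (fun j _ => ?_)
    haveI := hPj1 j
    exact (Submodule.finrank_map_le (ιL j).toLinearMap (LinearMap.range (Pj j : Ej j →ₗ[ℝ] Lj j))).trans
      (Nat.lt_succ_iff.mp (hPj2 j))
  -- conclude
  have haN : approxNumber (N + 1) T < ε :=
    lt_of_le_of_lt ((approxNumber_le_norm_sub T P hPfd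
      (Nat.lt_succ_of_le hPrank)).trans hTP) hmlt
  refine sSup_le ?_
  rintro d ⟨k, rfl, hk1, hkε⟩
  have hkN : k ≤ N := by
    by_contra h
    push_neg at h
    exact absurd (hkε.trans_lt (lt_of_le_of_lt
      (approxNumber_antitone (Nat.le_add_left 1 N) h T) haN)) (lt_irrefl ε)
  calc (k : ℕ∞) ≤ (N : ℕ∞) := by exact_mod_cast hkN
    _ = ∑ j, (n j : ℕ∞) := by rw [hN]; exact Nat.cast_sum _ _
    _ = ∑ j, nu0 (Tj j) ε := Finset.sum_congr rfl (fun j _ => hnj j)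
end

section
/- With the same setting of a disjoint decomposition Ω = (∪_j \overline{Ω_j})° with p-th-power-additive norms, the quantities μ₀ satisfy superadditivity: Σ_{j=1}^J μ₀(ε, Ω_j) ≤ μ₀(ε, Ω) for every ε > 0, where μ₀(ε, Ω) is the maximal dimension of a finite-dimensional subspace S of E(Ω) with sup_{u∈S∖{0}} ‖u‖_{E(Ω)}/‖u‖_{L_p(Ω)} ≤ 1/ε. -/
/-- Superadditivity of `μ₀` under a disjoint decomposition `Ω = (∪_j Ω̄_j)°`: abstractly,
elements of the pieces `E j` (resp. `L j`) embed into `E` (resp. `L`) by extension by zero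
`ιE j` (resp. `ιL j`), the norms of such direct sums add `p`-th-power-wise over the disjoint
pieces, and the embeddings are compatible, `T ∘ ιE j = ιL j ∘ Tj j`.  Then
`Σ_{j=1}^J μ₀(ε, Ω_j) ≤ μ₀(ε, Ω)` for every `ε > 0`. -/
theorem stmt3 {J : ℕ}
    {E L : Type*} [NormedAddCommGroup E] [NormedSpace ℝ E] [CompleteSpace E]
    [NormedAddCommGroup L] [NormedSpace ℝ L] [CompleteSpace L]
    {Ej Lj : Fin J → Type*}
    [∀ j, NormedAddCommGroup (Ej j)] [∀ j, NormedSpace ℝ (Ej j)] [∀ j, CompleteSpace (Ej j)]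
    [∀ j, NormedAddCommGroup (Lj j)] [∀ j, NormedSpace ℝ (Lj j)] [∀ j, CompleteSpace (Lj j)]
    (p : ℝ) (hp : 1 ≤ p)
    (T : E →L[ℝ] L) (Tj : ∀ j, Ej j →L[ℝ] Lj j)
    (ιE : ∀ j, Ej j →L[ℝ] E) (ιL : ∀ j, Lj j →L[ℝ] L)
    (hnormE : ∀ u : ∀ j, Ej j, ‖∑ j, ιE j (u j)‖ ^ p = ∑ j, ‖u j‖ ^ p)
    (hnormL : ∀ v : ∀ j, Lj j, ‖∑ j, ιL j (v j)‖ ^ p = ∑ j, ‖v j‖ ^ p)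
    (hcomm : ∀ (j : Fin J) (v : Ej j), T (ιE j v) = ιL j (Tj j v))
    (ε : ℝ) (hε : 0 < ε) :
    ∑ j, mu0 (Tj j) ε ≤ mu0 T ε := by
  have hp0 : 0 < p := lt_of_lt_of_le one_pos hp
  set A : Fin J → Set ℕ∞ := fun j => {d : ℕ∞ | ∃ S : Submodule ℝ (Ej j),
      FiniteDimensional ℝ S ∧ d = (Module.finrank ℝ S : ℕ∞) ∧
      ∀ u ∈ S, ‖u‖ ≤ ε⁻¹ * ‖Tj j u‖} with hA
  set B : Set ℕ∞ := {d : ℕ∞ | ∃ S : Submodule ℝ E, FiniteDimensional ℝ S ∧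
      d = (Module.finrank ℝ S : ℕ∞) ∧ ∀ u ∈ S, ‖u‖ ≤ ε⁻¹ * ‖T u‖} with hB
  have hA0 : ∀ j, (0 : ℕ∞) ∈ A j := by
    intro j
    refine ⟨⊥, inferInstance, by simp, ?_⟩
    intro u hu
    rw [Submodule.mem_bot] at hu
    simp [hu]
  -- Key: if `dj j ∈ A j` for each `j` then `∑ dj ∈ B`.
  have key : ∀ dj : Fin J → ℕ∞, (∀ j, dj j ∈ A j) → (∑ j, dj j) ∈ B := by
    intro dj hdj
    choose S hSfd hSrk hSbd using hdj
    -- the linear map from the product of the subspaces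
    let Φ : (∀ j, S j) →ₗ[ℝ] E :=
      { toFun := fun u => ∑ j, ιE j (u j : Ej j)
        map_add' := by
          intro u v
          simp [← Finset.sum_add_distrib]
        map_smul' := by
          intro c u
          simp [Finset.smul_sum] }
    have hΦ : ∀ u : ∀ j, S j, Φ u = ∑ j, ιE j (u j : Ej j) := fun _ => rfl
    have hsumzero : ∀ w : Fin J → ℝ, (∀ j, 0 ≤ w j) → ∑ j, w j ^ p = 0 →
        ∀ j, w j = 0 := by
      intro w hw hsum j
      have hterm : ∀ i ∈ Finset.univ, (0:ℝ) ≤ w i ^ p :=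
        fun i _ => Real.rpow_nonneg (hw i) p
      have := (Finset.sum_eq_zero_iff_of_nonneg hterm).mp hsum j (Finset.mem_univ j)
      have := Real.rpow_eq_zero_iff_of_nonneg (hw j) |>.mp this
      exact this.1
    have hΦinj : Function.Injective Φ := by
      rw [injective_iff_map_eq_zero]
      intro u hu
      have h0 : ‖∑ j, ιE j (u j : Ej j)‖ ^ p = ∑ j, ‖(u j : Ej j)‖ ^ p :=
        hnormE (fun j => (u j : Ej j))
      rw [hΦ] at hu
      rw [hu, norm_zero, Real.zero_rpow (ne_of_gt hp0)] at h0
      have hz : ∀ j, ‖(u j : Ej j)‖ = 0 :=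
        hsumzero _ (fun j => norm_nonneg _) h0.symm
      funext j
      exact Subtype.ext (norm_eq_zero.mp (hz j))
    haveI : ∀ j, FiniteDimensional ℝ (S j) := hSfd
    haveI : FiniteDimensional ℝ (∀ j, S j) := inferInstance
    refine ⟨LinearMap.range Φ, inferInstance, ?_, ?_⟩
    · rw [LinearMap.finrank_range_of_inj hΦinj, Module.finrank_pi_fintype]
      rw [Nat.cast_sum]
      exact Finset.sum_congr rfl fun j _ => hSrk j
    · rintro v ⟨u, rfl⟩
      rw [hΦ]
      have hTv : T (∑ j, ιE j (u j : Ej j)) = ∑ j, ιL j (Tj j (u j : Ej j)) := by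
        rw [map_sum]
        exact Finset.sum_congr rfl fun j _ => hcomm j _
      have h1 : ‖∑ j, ιE j (u j : Ej j)‖ ^ p = ∑ j, ‖(u j : Ej j)‖ ^ p :=
        hnormE _
      have h2 : ‖∑ j, ιL j (Tj j (u j : Ej j))‖ ^ p = ∑ j, ‖Tj j (u j : Ej j)‖ ^ p :=
        hnormL _
      have hle : ‖∑ j, ιE j (u j : Ej j)‖ ^ p ≤
          (ε⁻¹ * ‖T (∑ j, ιE j (u j : Ej j))‖) ^ p := by
        rw [h1, hTv, Real.mul_rpow (by positivity) (norm_nonneg _), h2,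
          Finset.mul_sum]
        refine Finset.sum_le_sum fun j _ => ?_
        calc ‖(u j : Ej j)‖ ^ p ≤ (ε⁻¹ * ‖Tj j (u j : Ej j)‖) ^ p :=
              Real.rpow_le_rpow (norm_nonneg _) (hSbd j _ (u j).2) hp0.le
          _ = ε⁻¹ ^ p * ‖Tj j (u j : Ej j)‖ ^ p :=
              Real.mul_rpow (by positivity) (norm_nonneg _)
      by_contra hcon
      push_neg at hcon
      have : (ε⁻¹ * ‖T (∑ j, ιE j (u j : Ej j))‖) ^ p <
          ‖∑ j, ιE j (u j : Ej j)‖ ^ p :=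
        Real.rpow_lt_rpow (by positivity) hcon hp0
      linarith
  have hμj : ∀ j, mu0 (Tj j) ε = sSup (A j) := fun j => rfl
  have hμ : mu0 T ε = sSup B := rfl
  rw [hμ]
  simp only [hμj]
  by_cases htop : ∀ j, sSup (A j) < ⊤
  · have hmem : ∀ j, sSup (A j) ∈ A j := by
      intro j
      haveI : Nonempty (A j) := ⟨⟨0, hA0 j⟩⟩
      exact ENat.sSup_mem_of_nonempty_of_lt_top (htop j)
    exact le_sSup (key _ hmem)
  · push_neg at htop
    obtain ⟨j0, hj0⟩ := htop
    have hj0' : sSup (A j0) = ⊤ := top_le_iff.mp hj0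
    have : sSup B = ⊤ := by
      rw [sSup_eq_top]
      intro b hb
      obtain ⟨a, ha, hba⟩ := (sSup_eq_top.mp hj0') b hb
      refine ⟨∑ j, (if j = j0 then a else 0), key _ ?_, ?_⟩
      · intro j
        by_cases h : j = j0
        · subst h; simpa using ha
        · simpa [h] using hA0 j
      · rwa [Finset.sum_ite_eq' Finset.univ j0 (fun _ => a), if_pos (Finset.mem_univ _)]
    rw [this]
    exact le_top
end

section
/- Let 1 ≤ p < ∞, m ∈ ℕ, σ > 0, and let E^m_{p,σ}(B_J) be the closure of C₀^m(B_J) under the norm (∫ |x|^{mp}(1+|log|x||)^{σp} Σ_{|α|=m}|D^αf|^p dx)^{1/p}, where B_J = {|x| < 2^{-J}}. Then there is a constant c > 0 (independent of J) such that the embedding id_J : E^m_{p,σ}(B_J) → L_p(B_J) has operator norm ‖id_J‖ ≤ c J^{-σ} for all sufficiently large J ∈ ℕ. -/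
open MeasureTheory Metric Set
open scoped ENNReal NNReal


lemma aux_F_hasDerivAt {h : ℝ → ℝ} (hc : Continuous h) (t : ℝ) :
    HasDerivAt (fun u => ∫ s in u..(1:ℝ), h s) (-h t) t := by
  have h1 : HasDerivAt (fun u => ∫ s in (1:ℝ)..u, h s) (h t) t :=
    (hc.integral_hasStrictDerivAt 1 t).hasDerivAt
  have he : (fun u => ∫ s in u..(1:ℝ), h s) = fun u => -∫ s in (1:ℝ)..u, h s := by
    funext u; rw [intervalIntegral.integral_symm]
  rw [he]; exact h1.neg

lemma hardy1D {p a : ℝ} (hp : 1 ≤ p) (ha : 0 ≤ a) {h : ℝ → ℝ}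
    (hc : Continuous h) (hpos : ∀ t, 0 ≤ h t) :
    ∫ t in Ioc (0:ℝ) 1, t ^ a * (∫ s in t..(1:ℝ), h s) ^ p
      ≤ (p / (a + 1)) ^ p * ∫ s in Ioc (0:ℝ) 1, s ^ (p + a) * h s ^ p := by
  have hp0 : (0:ℝ) < p := lt_of_lt_of_le one_pos hp
  have ha1 : (0:ℝ) < a + 1 := by linarith
  set F : ℝ → ℝ := fun u => ∫ s in u..(1:ℝ), h s with hF
  have hFd : ∀ t, HasDerivAt F (-h t) t := aux_F_hasDerivAt hc
  have hFc : Continuous F :=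
    continuous_iff_continuousAt.2 fun t => (hFd t).continuousAt
  have hFnn : ∀ u, u ≤ 1 → 0 ≤ F u := fun u hu =>
    intervalIntegral.integral_nonneg hu fun s _ => hpos s
  have hF1 : F 1 = 0 := intervalIntegral.integral_same
  -- continuity of powers
  have c1 : Continuous fun t : ℝ => t ^ a := Real.continuous_rpow_const ha
  have c2 : Continuous fun t => F t ^ p :=
    (Real.continuous_rpow_const hp0.le).comp hFc
  have c3 : Continuous fun t : ℝ => t ^ (a + 1) :=
    Real.continuous_rpow_const (by linarith)
  have c4 : Continuous fun t => F t ^ (p - 1) :=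
    (Real.continuous_rpow_const (by linarith)).comp hFc
  -- derivative of Φ
  have key : ∀ t, HasDerivAt (fun u => u ^ (a+1) / (a+1) * F u ^ p)
      (t ^ a * F t ^ p + t ^ (a+1) / (a+1) * (-h t * p * F t ^ (p-1))) t := by
    intro t
    have h1 : HasDerivAt (fun u : ℝ => u ^ (a+1)) ((a+1) * t ^ a) t := by
      have := Real.hasDerivAt_rpow_const (x := t) (p := a + 1) (Or.inr (by linarith))
      simpa using this
    have h2 : HasDerivAt (fun u => F u ^ p) (-h t * p * F t ^ (p-1)) t :=
      (hFd t).rpow_const (Or.inr hp)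
    have h3 := (h1.div_const (a+1)).mul h2
    exact h3.congr_deriv (by rw [mul_div_cancel_left₀ _ ha1.ne'])
  have hcontD : Continuous fun t =>
      t ^ a * F t ^ p + t ^ (a+1) / (a+1) * (-h t * p * F t ^ (p-1)) :=
    (c1.mul c2).add ((c3.div_const _).mul ((hc.neg.mul continuous_const).mul c4))
  have hftc := intervalIntegral.integral_eq_sub_of_hasDerivAt
      (f := fun u => u ^ (a+1) / (a+1) * F u ^ p) (a := 0) (b := 1)
      (fun t _ => key t) (hcontD.intervalIntegrable 0 1)
  have hval : (1:ℝ) ^ (a+1) / (a+1) * F 1 ^ p - (0:ℝ) ^ (a+1) / (a+1) * F 0 ^ p = 0 := by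
    rw [hF1, Real.zero_rpow hp0.ne', Real.zero_rpow ha1.ne']
    ring
  rw [hval] at hftc
  -- split
  have hi1 : IntervalIntegrable (fun t => t ^ a * F t ^ p) volume 0 1 :=
    (c1.mul c2).intervalIntegrable 0 1
  have hiB : IntervalIntegrable
      (fun t => t ^ (a+1) / (a+1) * (-h t * p * F t ^ (p-1))) volume 0 1 :=
    ((c3.div_const _).mul ((hc.neg.mul continuous_const).mul c4)).intervalIntegrable 0 1
  rw [intervalIntegral.integral_add hi1 hiB] at hftc
  have hXeq : ∫ t in (0:ℝ)..1, t ^ a * F t ^ p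
      = (p/(a+1)) * ∫ t in (0:ℝ)..1, t ^ (a+1) * h t * F t ^ (p-1) := by
    have h5 : ∫ t in (0:ℝ)..1, t ^ a * F t ^ p
        = - ∫ t in (0:ℝ)..1, t ^ (a+1) / (a+1) * (-h t * p * F t ^ (p-1)) := by
      linarith
    rw [h5, ← intervalIntegral.integral_neg, ← intervalIntegral.integral_const_mul]
    exact intervalIntegral.integral_congr fun t _ => by ring
  rw [intervalIntegral.integral_of_le zero_le_one,
      intervalIntegral.integral_of_le zero_le_one] at hXeq
  rcases eq_or_lt_of_le hp with rfl | hp1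
  · -- p = 1
    rw [hXeq, Real.rpow_one]
    refine mul_le_mul_of_nonneg_left (le_of_eq ?_) (by positivity)
    refine setIntegral_congr_fun measurableSet_Ioc fun t ht => ?_
    have h11 : (1:ℝ) - 1 = 0 := by norm_num
    rw [h11, Real.rpow_zero, Real.rpow_one, mul_one, add_comm a 1]
  · -- 1 < p
    set q := p.conjExponent with hq
    have hpq : p.HolderConjugate q := Real.HolderConjugate.conjExponent hp1
    have hq0 : 0 < q := hpq.symm.pos
    have hqe : q = p / (p - 1) := rfl
    have hp1' : p - 1 ≠ 0 := sub_ne_zero.2 (ne_of_gt hp1)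
    haveI : IsFiniteMeasure (volume.restrict (Ioc (0:ℝ) 1)) := by
      constructor
      rw [Measure.restrict_apply_univ, Real.volume_Ioc]
      exact ENNReal.ofReal_lt_top
    have hfc : Continuous fun t : ℝ => t ^ ((p+a)/p) * h t :=
      (Real.continuous_rpow_const (by positivity)).mul hc
    have hgc : Continuous fun t : ℝ => t ^ (a/q) * F t ^ (p-1) :=
      (Real.continuous_rpow_const (by positivity)).mul c4
    obtain ⟨C1, hC1⟩ :=
      (isCompact_Icc (a := (0:ℝ)) (b := 1)).exists_bound_of_continuousOn hfc.continuousOn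
    obtain ⟨C2, hC2⟩ :=
      (isCompact_Icc (a := (0:ℝ)) (b := 1)).exists_bound_of_continuousOn hgc.continuousOn
    have hmem1 : MemLp (fun t : ℝ => t ^ ((p+a)/p) * h t) (ENNReal.ofReal p) (volume.restrict (Ioc (0:ℝ) 1)) :=
      MemLp.of_bound hfc.aestronglyMeasurable C1
        (by filter_upwards [ae_restrict_mem measurableSet_Ioc] with t ht
            exact hC1 t (Ioc_subset_Icc_self ht))
    have hmem2 : MemLp (fun t : ℝ => t ^ (a/q) * F t ^ (p-1)) (ENNReal.ofReal q) (volume.restrict (Ioc (0:ℝ) 1)) :=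
      MemLp.of_bound hgc.aestronglyMeasurable C2
        (by filter_upwards [ae_restrict_mem measurableSet_Ioc] with t ht
            exact hC2 t (Ioc_subset_Icc_self ht))
    have hH := MeasureTheory.integral_mul_norm_le_Lp_mul_Lq (μ := volume.restrict (Ioc (0:ℝ) 1)) hpq hmem1 hmem2
    have eqA : ∫ t, ‖t ^ ((p+a)/p) * h t‖ * ‖t ^ (a/q) * F t ^ (p-1)‖ ∂(volume.restrict (Ioc (0:ℝ) 1))
        = ∫ t in Ioc (0:ℝ) 1, t ^ (a+1) * h t * F t ^ (p-1) := by
      refine setIntegral_congr_fun measurableSet_Ioc fun t ht => ?_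
      have ht0 : (0:ℝ) < t := ht.1
      have hFt : 0 ≤ F t := hFnn t ht.2
      rw [Real.norm_eq_abs, Real.norm_eq_abs,
        abs_of_nonneg (mul_nonneg (Real.rpow_nonneg ht0.le _) (hpos t)),
        abs_of_nonneg (mul_nonneg (Real.rpow_nonneg ht0.le _) (Real.rpow_nonneg hFt _))]
      have hexp : (p+a)/p + a/q = a + 1 := by rw [hqe]; field_simp; ring
      rw [← hexp, Real.rpow_add ht0]; ring
    have eqB : ∫ t, ‖t ^ ((p+a)/p) * h t‖ ^ p ∂(volume.restrict (Ioc (0:ℝ) 1))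
        = ∫ t in Ioc (0:ℝ) 1, t ^ (p+a) * h t ^ p := by
      refine setIntegral_congr_fun measurableSet_Ioc fun t ht => ?_
      have ht0 : (0:ℝ) < t := ht.1
      rw [Real.norm_eq_abs,
        abs_of_nonneg (mul_nonneg (Real.rpow_nonneg ht0.le _) (hpos t)),
        Real.mul_rpow (Real.rpow_nonneg ht0.le _) (hpos t),
        ← Real.rpow_mul ht0.le, div_mul_cancel₀ _ hp0.ne']
    have eqC : ∫ t, ‖t ^ (a/q) * F t ^ (p-1)‖ ^ q ∂(volume.restrict (Ioc (0:ℝ) 1))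
        = ∫ t in Ioc (0:ℝ) 1, t ^ a * F t ^ p := by
      refine setIntegral_congr_fun measurableSet_Ioc fun t ht => ?_
      have ht0 : (0:ℝ) < t := ht.1
      have hFt : 0 ≤ F t := hFnn t ht.2
      have hpq' : (p - 1) * q = p := by rw [hqe]; field_simp
      rw [Real.norm_eq_abs,
        abs_of_nonneg (mul_nonneg (Real.rpow_nonneg ht0.le _) (Real.rpow_nonneg hFt _)),
        Real.mul_rpow (Real.rpow_nonneg ht0.le _) (Real.rpow_nonneg hFt _),
        ← Real.rpow_mul ht0.le, div_mul_cancel₀ _ hq0.ne',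
        ← Real.rpow_mul hFt, hpq']
    rw [eqA, eqB, eqC] at hH
    set X := ∫ t in Ioc (0:ℝ) 1, t ^ a * F t ^ p with hX
    set Y := ∫ t in Ioc (0:ℝ) 1, t ^ (p+a) * h t ^ p with hY
    have Xnn : 0 ≤ X := setIntegral_nonneg measurableSet_Ioc fun t ht =>
      mul_nonneg (Real.rpow_nonneg ht.1.le _) (Real.rpow_nonneg (hFnn t ht.2) _)
    have Ynn : 0 ≤ Y := setIntegral_nonneg measurableSet_Ioc fun t ht =>
      mul_nonneg (Real.rpow_nonneg ht.1.le _) (Real.rpow_nonneg (hpos t) _)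
    rcases eq_or_lt_of_le Xnn with hX0 | hXpos
    · rw [← hX0]
      exact mul_nonneg (Real.rpow_nonneg (by positivity) p) Ynn
    · have h6 : X ≤ (p/(a+1)) * (Y ^ (1/p) * X ^ (1/q)) := by
        calc X = (p/(a+1)) * (∫ t in Ioc (0:ℝ) 1, t ^ (a+1) * h t * F t ^ (p-1)) := hXeq
          _ ≤ (p/(a+1)) * (Y ^ (1/p) * X ^ (1/q)) :=
              mul_le_mul_of_nonneg_left hH (by positivity)
      have hXq : (0:ℝ) < X ^ (1/q) := Real.rpow_pos_of_pos hXpos _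
      have h7 : X ^ (1/p) * X ^ (1/q) = X := by
        rw [← Real.rpow_add hXpos, one_div, one_div, hpq.inv_add_inv_eq_one, Real.rpow_one]
      have h8 : X ^ (1/p) ≤ (p/(a+1)) * Y ^ (1/p) := by
        refine le_of_mul_le_mul_right ?_ hXq
        rw [h7]
        exact h6.trans (le_of_eq (by ring))
      calc X = (X ^ (1/p)) ^ p := by
              rw [← Real.rpow_mul Xnn, one_div, inv_mul_cancel₀ hp0.ne', Real.rpow_one]
        _ ≤ ((p/(a+1)) * Y ^ (1/p)) ^ p :=
              Real.rpow_le_rpow (Real.rpow_nonneg Xnn _) h8 hp0.le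
        _ = (p/(a+1)) ^ p * (Y ^ (1/p)) ^ p :=
              Real.mul_rpow (by positivity) (Real.rpow_nonneg Ynn _)
        _ = (p/(a+1)) ^ p * Y := by
              rw [← Real.rpow_mul Ynn, one_div, inv_mul_cancel₀ hp0.ne', Real.rpow_one]

lemma hardy1D_lintegral {p a : ℝ} (hp : 1 ≤ p) (ha : 0 ≤ a) {u h : ℝ → ℝ}
    (hch : Continuous h) (hnu : ∀ t, 0 ≤ u t) (hnh : ∀ t, 0 ≤ h t)
    (hb : ∀ t ∈ Ioc (0:ℝ) 1, u t ≤ ∫ s in t..(1:ℝ), h s) :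
    ∫⁻ t in Ioc (0:ℝ) 1, ENNReal.ofReal (t ^ a * u t ^ p)
      ≤ ENNReal.ofReal (p ^ p) * ∫⁻ t in Ioc (0:ℝ) 1, ENNReal.ofReal (t ^ (p + a) * h t ^ p) := by
  have hp0 : (0:ℝ) < p := lt_of_lt_of_le one_pos hp
  set F : ℝ → ℝ := fun t => ∫ s in t..(1:ℝ), h s with hF
  have hFc : Continuous F :=
    continuous_iff_continuousAt.2 fun t => (aux_F_hasDerivAt hch t).continuousAt
  have hFnn : ∀ t, t ≤ 1 → 0 ≤ F t := fun t ht =>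
    intervalIntegral.integral_nonneg ht fun s _ => hnh s
  have hFcont2 : Continuous fun t : ℝ => t ^ a * F t ^ p :=
    (Real.continuous_rpow_const ha).mul ((Real.continuous_rpow_const hp0.le).comp hFc)
  have hHcont2 : Continuous fun t : ℝ => t ^ (p + a) * h t ^ p :=
    (Real.continuous_rpow_const (by positivity)).mul
      ((Real.continuous_rpow_const hp0.le).comp hch)
  have step1 : ∫⁻ t in Ioc (0:ℝ) 1, ENNReal.ofReal (t ^ a * u t ^ p)
      ≤ ∫⁻ t in Ioc (0:ℝ) 1, ENNReal.ofReal (t ^ a * F t ^ p) := by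
    refine setLIntegral_mono hFcont2.measurable.ennreal_ofReal fun t ht => ?_
    exact ENNReal.ofReal_le_ofReal (mul_le_mul_of_nonneg_left
      (Real.rpow_le_rpow (hnu t) (hb t ht) hp0.le) (Real.rpow_nonneg ht.1.le _))
  refine step1.trans ?_
  have e1 : ∫⁻ t in Ioc (0:ℝ) 1, ENNReal.ofReal (t ^ a * F t ^ p)
      = ENNReal.ofReal (∫ t in Ioc (0:ℝ) 1, t ^ a * F t ^ p) := by
    rw [ofReal_integral_eq_lintegral_ofReal hFcont2.integrableOn_Ioc
      (by filter_upwards [ae_restrict_mem measurableSet_Ioc] with t ht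
          exact mul_nonneg (Real.rpow_nonneg ht.1.le _) (Real.rpow_nonneg (hFnn t ht.2) _))]
  have e2 : ∫⁻ t in Ioc (0:ℝ) 1, ENNReal.ofReal (t ^ (p + a) * h t ^ p)
      = ENNReal.ofReal (∫ t in Ioc (0:ℝ) 1, t ^ (p + a) * h t ^ p) := by
    rw [ofReal_integral_eq_lintegral_ofReal hHcont2.integrableOn_Ioc
      (by filter_upwards [ae_restrict_mem measurableSet_Ioc] with t ht
          exact mul_nonneg (Real.rpow_nonneg ht.1.le _) (Real.rpow_nonneg (hnh t) _))]
  rw [e1, e2, ← ENNReal.ofReal_mul (by positivity)]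
  refine ENNReal.ofReal_le_ofReal ?_
  refine (hardy1D hp ha hch hnh).trans ?_
  have hZnn : 0 ≤ ∫ t in Ioc (0:ℝ) 1, t ^ (p + a) * h t ^ p :=
    setIntegral_nonneg measurableSet_Ioc fun t ht =>
      mul_nonneg (Real.rpow_nonneg ht.1.le _) (Real.rpow_nonneg (hnh t) _)
  refine mul_le_mul_of_nonneg_right ?_ hZnn
  exact Real.rpow_le_rpow (by positivity) (div_le_self hp0.le (by linarith)) hp0.le

lemma hardy_line {p a : ℝ} (hp : 1 ≤ p) (ha : 0 ≤ a) {u h : ℝ → ℝ}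
    (hcu : Continuous u) (hch : Continuous h) (hnu : ∀ t, 0 ≤ u t) (hnh : ∀ t, 0 ≤ h t)
    (hbp : ∀ t ∈ Ioc (0:ℝ) 1, u t ≤ ∫ s in t..(1:ℝ), h s)
    (hbn : ∀ t ∈ Ico (-1:ℝ) 0, u t ≤ ∫ s in (-1:ℝ)..t, h s)
    (hvan : ∀ t : ℝ, 1 ≤ |t| → u t = 0) :
    ∫⁻ t, ENNReal.ofReal (|t| ^ a * u t ^ p)
      ≤ ENNReal.ofReal (p ^ p) * ∫⁻ t, ENNReal.ofReal (|t| ^ (p + a) * h t ^ p) := by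
  have hp0 : (0:ℝ) < p := lt_of_lt_of_le one_pos hp
  set G : ℝ → ℝ≥0∞ := fun t => ENNReal.ofReal (|t| ^ a * u t ^ p) with hG
  set H : ℝ → ℝ≥0∞ := fun t => ENNReal.ofReal (|t| ^ (p + a) * h t ^ p) with hH
  have hnegpre : (Neg.neg : ℝ → ℝ) ⁻¹' (Ico (-1:ℝ) 0) = Ioc (0:ℝ) 1 := by
    ext t
    simp only [mem_preimage, mem_Ico, mem_Ioc]
    constructor
    · rintro ⟨h1, h2⟩; constructor <;> linarith
    · rintro ⟨h1, h2⟩; constructor <;> linarith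
  have hmpneg : MeasurePreserving (Neg.neg : ℝ → ℝ) volume volume :=
    Measure.measurePreserving_neg _
  have hembneg : MeasurableEmbedding (Neg.neg : ℝ → ℝ) :=
    (Homeomorph.neg ℝ).measurableEmbedding
  -- decomposition of the left-hand side
  have hdec : ∫⁻ t, G t
      = (∫⁻ t in Ico (-1:ℝ) 0, G t) + ∫⁻ t in Ioc (0:ℝ) 1, G t := by
    have h1 : ∫⁻ t, G t
        = (∫⁻ t in Icc (-1:ℝ) 1, G t) + ∫⁻ t in (Icc (-1:ℝ) 1)ᶜ, G t :=
      (lintegral_add_compl _ measurableSet_Icc).symm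
    have h2 : ∫⁻ t in (Icc (-1:ℝ) 1)ᶜ, G t = 0 := by
      have hz : ∀ t ∈ (Icc (-1:ℝ) 1)ᶜ, G t = 0 := by
        intro t ht
        have h1t : 1 ≤ |t| := by
          simp only [mem_compl_iff, mem_Icc, not_and_or, not_le] at ht
          rcases ht with h1t | h1t
          · rw [abs_of_neg (by linarith)]; linarith
          · rw [abs_of_pos (by linarith)]; linarith
        simp only [hG, hvan t h1t, Real.zero_rpow hp0.ne', mul_zero, ENNReal.ofReal_zero]
      calc ∫⁻ t in (Icc (-1:ℝ) 1)ᶜ, G t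
          = ∫⁻ _ in (Icc (-1:ℝ) 1)ᶜ, 0 :=
            setLIntegral_congr_fun_ae measurableSet_Icc.compl (ae_of_all _ hz)
        _ = 0 := lintegral_zero
    have h3 : Icc (-1:ℝ) 1 = Ico (-1:ℝ) 0 ∪ Icc (0:ℝ) 1 :=
      (Ico_union_Icc_eq_Icc (by norm_num) (by norm_num)).symm
    have hdisj : Disjoint (Ico (-1:ℝ) 0) (Icc (0:ℝ) 1) :=
      Set.disjoint_left.2 fun t ht ht' => absurd ht'.1 (not_le.2 ht.2)
    have h4 : ∫⁻ t in Icc (0:ℝ) 1, G t = ∫⁻ t in Ioc (0:ℝ) 1, G t := by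
      rw [Measure.restrict_congr_set Ioc_ae_eq_Icc]
    rw [h1, h2, add_zero, h3, lintegral_union measurableSet_Icc hdisj, h4]
  -- positive part
  have hpos : ∫⁻ t in Ioc (0:ℝ) 1, G t
      ≤ ENNReal.ofReal (p ^ p) * ∫⁻ t in Ioc (0:ℝ) 1, H t := by
    have e1 : ∫⁻ t in Ioc (0:ℝ) 1, G t
        = ∫⁻ t in Ioc (0:ℝ) 1, ENNReal.ofReal (t ^ a * u t ^ p) :=
      setLIntegral_congr_fun_ae measurableSet_Ioc
        (ae_of_all _ fun t ht => by rw [hG]; simp only; rw [abs_of_pos ht.1])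
    have e2 : ∫⁻ t in Ioc (0:ℝ) 1, ENNReal.ofReal (t ^ (p + a) * h t ^ p)
        = ∫⁻ t in Ioc (0:ℝ) 1, H t :=
      setLIntegral_congr_fun_ae measurableSet_Ioc
        (ae_of_all _ fun t ht => by rw [hH]; simp only; rw [abs_of_pos ht.1])
    rw [e1, ← e2]
    exact hardy1D_lintegral hp ha hch hnu hnh hbp
  -- negative part
  have hneg : ∫⁻ t in Ico (-1:ℝ) 0, G t
      ≤ ENNReal.ofReal (p ^ p) * ∫⁻ t in Ico (-1:ℝ) 0, H t := by
    have eG : ∫⁻ t in Ico (-1:ℝ) 0, G t = ∫⁻ t in Ioc (0:ℝ) 1, G (-t) := by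
      rw [← hmpneg.setLIntegral_comp_preimage_emb hembneg, hnegpre]
    have eH : ∫⁻ t in Ico (-1:ℝ) 0, H t = ∫⁻ t in Ioc (0:ℝ) 1, H (-t) := by
      rw [← hmpneg.setLIntegral_comp_preimage_emb hembneg, hnegpre]
    rw [eG, eH]
    have e1 : ∫⁻ t in Ioc (0:ℝ) 1, G (-t)
        = ∫⁻ t in Ioc (0:ℝ) 1, ENNReal.ofReal (t ^ a * u (-t) ^ p) :=
      setLIntegral_congr_fun_ae measurableSet_Ioc
        (ae_of_all _ fun t ht => by
          rw [hG]; simp only [abs_neg]; rw [abs_of_pos ht.1])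
    have e2 : ∫⁻ t in Ioc (0:ℝ) 1, ENNReal.ofReal (t ^ (p + a) * h (-t) ^ p)
        = ∫⁻ t in Ioc (0:ℝ) 1, H (-t) :=
      setLIntegral_congr_fun_ae measurableSet_Ioc
        (ae_of_all _ fun t ht => by
          rw [hH]; simp only [abs_neg]; rw [abs_of_pos ht.1])
    rw [e1, ← e2]
    refine hardy1D_lintegral hp ha (hch.comp continuous_neg) (fun t => hnu _)
      (fun t => hnh _) (fun t ht => ?_)
    have hmem : -t ∈ Ico (-1:ℝ) 0 := by
      simp only [mem_Ico]
      exact ⟨by linarith [ht.2], by linarith [ht.1]⟩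
    refine (hbn (-t) hmem).trans (le_of_eq ?_)
    rw [← intervalIntegral.integral_comp_neg (a := t) (b := 1) h]
  -- combine
  rw [hdec]
  have hdisj2 : Disjoint (Ico (-1:ℝ) 0) (Ioc (0:ℝ) 1) :=
    Set.disjoint_left.2 fun t ht ht' => absurd ht'.1 (not_lt.2 ht.2.le)
  calc (∫⁻ t in Ico (-1:ℝ) 0, G t) + ∫⁻ t in Ioc (0:ℝ) 1, G t
      ≤ ENNReal.ofReal (p ^ p) * (∫⁻ t in Ico (-1:ℝ) 0, H t)
        + ENNReal.ofReal (p ^ p) * ∫⁻ t in Ioc (0:ℝ) 1, H t := add_le_add hneg hpos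
    _ = ENNReal.ofReal (p ^ p) *
        ((∫⁻ t in Ico (-1:ℝ) 0, H t) + ∫⁻ t in Ioc (0:ℝ) 1, H t) := by ring
    _ = ENNReal.ofReal (p ^ p) * ∫⁻ t in Ico (-1:ℝ) 0 ∪ Ioc (0:ℝ) 1, H t := by
        rw [lintegral_union measurableSet_Ioc hdisj2]
    _ ≤ ENNReal.ofReal (p ^ p) * ∫⁻ t, H t :=
        mul_le_mul_right (setLIntegral_le_lintegral _ _) _

lemma euclid_coord_le {d : ℕ} (x : EuclideanSpace ℝ (Fin d)) (i : Fin d) :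
    |x i| ≤ ‖x‖ := by
  rw [EuclideanSpace.norm_eq, ← Real.sqrt_sq_eq_abs]
  apply Real.sqrt_le_sqrt
  have := Finset.single_le_sum (f := fun j => ‖x j‖ ^ 2)
    (fun j _ => sq_nonneg _) (Finset.mem_univ i)
  simpa [Real.norm_eq_abs, sq_abs] using this

lemma norm_le_intervalIntegral_right {V : Type*} [NormedAddCommGroup V]
    [NormedSpace ℝ V] [CompleteSpace V] {A A' : ℝ → V}
    (hA : ∀ t, HasDerivAt A (A' t) t) (hA' : Continuous A')
    {t b : ℝ} (ht : t ≤ b) (hb : A b = 0) : ‖A t‖ ≤ ∫ s in t..b, ‖A' s‖ := by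
  have hftc : ∫ s in t..b, A' s = A b - A t :=
    intervalIntegral.integral_eq_sub_of_hasDerivAt (fun s _ => hA s)
      (hA'.intervalIntegrable _ _)
  have h1 : ‖A t‖ = ‖∫ s in t..b, A' s‖ := by rw [hftc, hb, zero_sub, norm_neg]
  rw [h1]
  exact intervalIntegral.norm_integral_le_integral_norm ht

lemma norm_le_intervalIntegral_left {V : Type*} [NormedAddCommGroup V]
    [NormedSpace ℝ V] [CompleteSpace V] {A A' : ℝ → V}
    (hA : ∀ t, HasDerivAt A (A' t) t) (hA' : Continuous A')
    {t b : ℝ} (ht : b ≤ t) (hb : A b = 0) : ‖A t‖ ≤ ∫ s in b..t, ‖A' s‖ := by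
  have hftc : ∫ s in b..t, A' s = A t - A b :=
    intervalIntegral.integral_eq_sub_of_hasDerivAt (fun s _ => hA s)
      (hA'.intervalIntegrable _ _)
  have h1 : ‖A t‖ = ‖∫ s in b..t, A' s‖ := by rw [hftc, hb, sub_zero]
  rw [h1]
  exact intervalIntegral.norm_integral_le_integral_norm ht


noncomputable def Phi (N : ℕ) : (ℝ × (Fin N → ℝ)) ≃ᵐ EuclideanSpace ℝ (Fin (N+1)) :=
  (MeasurableEquiv.piFinSuccAbove (fun _ : Fin (N+1) => ℝ) 0).symm.trans
    (MeasurableEquiv.toLp 2 (Fin (N+1) → ℝ))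

lemma Phi_eq_insertNth (N : ℕ) (t : ℝ) (y : Fin N → ℝ) (j : Fin (N+1)) :
    (Phi N (t, y)) j = Fin.insertNth (α := fun _ : Fin (N+1) => ℝ) 0 t y j := rfl

lemma Phi_measurePreserving (N : ℕ) : MeasurePreserving (Phi N) volume volume := by
  have h1 := (volume_preserving_piFinSuccAbove (fun _ : Fin (N+1) => ℝ) 0).symm
  have h2 := (EuclideanSpace.volume_preserving_symm_measurableEquiv_toLp (Fin (N+1))).symm
  exact h2.comp h1

lemma Phi_apply_zero (N : ℕ) (t : ℝ) (y : Fin N → ℝ) : (Phi N (t, y)) 0 = t := by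
  rw [Phi_eq_insertNth]; simp

lemma Phi_affine (N : ℕ) (y : Fin N → ℝ) (t : ℝ) :
    Phi N (t, y) = Phi N (0, y) + t • (EuclideanSpace.single (0 : Fin (N+1)) (1:ℝ)) := by
  ext j
  rw [PiLp.add_apply, PiLp.smul_apply, Phi_eq_insertNth, Phi_eq_insertNth]
  refine Fin.cases ?_ (fun i => ?_) j
  · simp
  · rw [Fin.insertNth_zero', Fin.insertNth_zero']
    simp [Fin.cons_succ, EuclideanSpace.single_apply, Fin.succ_ne_zero]

set_option maxHeartbeats 1000000 in
/-- The operator norm of the embedding `id_J : E^m_{p,σ}(B_J) → L_p(B_J)`, where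
`B_J = {|x| < 2^{-J}}`, is `≤ c J^{-σ}` for all sufficiently large `J`, with `c`
independent of `J`.  Since `C₀^m(B_J)` is dense in `E^m_{p,σ}(B_J)`, this is expressed
as the corresponding inequality for all `C₀^m`-functions supported in `B_J`:
`‖f‖_{L_p} ≤ c J^{-σ} ‖f‖_{E^m_{p,σ}}`. -/
theorem stmt7 (n : ℕ) (hn : 0 < n) (p : ℝ) (hp : 1 ≤ p) (m : ℕ) (hm : 0 < m)
    (σ : ℝ) (hσ : 0 < σ) :
    ∃ c : ℝ, 0 < c ∧ ∃ J₀ : ℕ, ∀ J : ℕ, J₀ ≤ J →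
      ∀ f : EuclideanSpace ℝ (Fin n) → ℝ,
        ContDiff ℝ (m : ℕ∞) f → HasCompactSupport f →
        tsupport f ⊆ ball (0 : EuclideanSpace ℝ (Fin n)) ((2 : ℝ) ^ (-(J : ℝ))) →
        (∫ x, |f x| ^ p) ^ (1 / p)
          ≤ c * (J : ℝ) ^ (-σ) *
            (∫ x, ‖x‖ ^ ((m : ℝ) * p) * (1 + |Real.log ‖x‖|) ^ (σ * p) *
                ‖iteratedFDeriv ℝ m f x‖ ^ p) ^ (1 / p) := by
  obtain ⟨N, rfl⟩ : ∃ N, n = N + 1 := ⟨n - 1, (Nat.succ_pred_eq_of_pos hn).symm⟩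
  have hp0 : (0:ℝ) < p := lt_of_lt_of_le one_pos hp
  have hl2 : (0:ℝ) < Real.log 2 := Real.log_pos one_lt_two
  refine ⟨p ^ m * (Real.log 2) ^ (-σ),
    mul_pos (pow_pos hp0 m) (Real.rpow_pos_of_pos hl2 _), 1,
    fun J hJ f hf hsupp hball => ?_⟩
  have hJ1 : (1:ℝ) ≤ (J:ℝ) := by exact_mod_cast hJ
  have hJ0 : (0:ℝ) < (J:ℝ) := by linarith
  set r : ℝ := (2:ℝ) ^ (-(J:ℝ)) with hr
  have hr0 : 0 < r := Real.rpow_pos_of_pos two_pos _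
  have hr1 : r < 1 := Real.rpow_lt_one_of_one_lt_of_neg one_lt_two (by linarith)
  set v : EuclideanSpace ℝ (Fin (N+1)) := EuclideanSpace.single (0 : Fin (N+1)) (1:ℝ) with hv
  have hvnorm : ‖v‖ = 1 := by rw [hv, EuclideanSpace.norm_single]; norm_num
  have hΦmp := Phi_measurePreserving N
  have hΦemb : MeasurableEmbedding (Phi N) := (Phi N).measurableEmbedding
  have hΦcont_y : ∀ y : Fin N → ℝ, Continuous fun t : ℝ => Phi N (t, y) := by
    intro y
    have he : (fun t : ℝ => Phi N (t, y)) = fun t => Phi N (0, y) + t • v := by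
      funext t; exact Phi_affine N y t
    rw [he]
    exact continuous_const.add (continuous_id.smul continuous_const)
  have hΦline : ∀ (y : Fin N → ℝ) (t : ℝ), HasDerivAt (fun s : ℝ => Phi N (s, y)) v t := by
    intro y t
    have he : (fun s : ℝ => Phi N (s, y)) = fun s => Phi N (0, y) + s • v := by
      funext s; exact Phi_affine N y s
    rw [he]
    simpa using ((hasDerivAt_id t).smul_const v).const_add (Phi N (0, y))
  have hnorm_ge : ∀ (y : Fin N → ℝ) (t : ℝ), |t| ≤ ‖Phi N (t, y)‖ := by
    intro y t
    have h1 := euclid_coord_le (Phi N (t, y)) 0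
    rwa [Phi_apply_zero] at h1
  have hvanish : ∀ (k : ℕ) (x : EuclideanSpace ℝ (Fin (N+1))), 1 ≤ ‖x‖ →
      iteratedFDeriv ℝ k f x = 0 := by
    intro k x hx
    apply image_eq_zero_of_notMem_tsupport
    intro hmem
    have h2 := hball (tsupport_iteratedFDeriv_subset k hmem)
    rw [mem_ball_zero_iff] at h2
    linarith
  -- the Hardy chain along lines
  have chain : ∀ (y : Fin N → ℝ) (k : ℕ), k ≤ m →
      (∫⁻ t : ℝ, ENNReal.ofReal (‖iteratedFDeriv ℝ 0 f (Phi N (t, y))‖ ^ p))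
        ≤ (ENNReal.ofReal (p ^ p)) ^ k *
          ∫⁻ t : ℝ, ENNReal.ofReal (|t| ^ ((k:ℝ) * p) *
            ‖iteratedFDeriv ℝ k f (Phi N (t, y))‖ ^ p) := by
    intro y k
    induction k with
    | zero =>
      intro _
      simp [Real.rpow_zero]
    | succ k ih =>
      intro hk1
      have hk : k ≤ m := by omega
      have hg : ContDiff ℝ 1 (iteratedFDeriv ℝ k f) := by
        apply hf.iteratedFDeriv_right
        exact_mod_cast (by omega : 1 + k ≤ m)
      have hcu : Continuous fun t : ℝ => ‖iteratedFDeriv ℝ k f (Phi N (t, y))‖ :=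
        ((hf.continuous_iteratedFDeriv (by exact_mod_cast hk)).comp (hΦcont_y y)).norm
      have hch : Continuous fun t : ℝ => ‖iteratedFDeriv ℝ (k+1) f (Phi N (t, y))‖ :=
        ((hf.continuous_iteratedFDeriv (by exact_mod_cast hk1)).comp (hΦcont_y y)).norm
      set A : ℝ → (EuclideanSpace ℝ (Fin (N+1)) [×k]→L[ℝ] ℝ) :=
        fun s => iteratedFDeriv ℝ k f (Phi N (s, y)) with hA
      set A' : ℝ → (EuclideanSpace ℝ (Fin (N+1)) [×k]→L[ℝ] ℝ) :=
        fun s => (fderiv ℝ (iteratedFDeriv ℝ k f) (Phi N (s, y))) v with hA'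
      have hAd : ∀ s, HasDerivAt A (A' s) s := fun s =>
        ((hg.differentiable one_ne_zero (Phi N (s, y))).hasFDerivAt).comp_hasDerivAt s (hΦline y s)
      have hA'c : Continuous A' :=
        ((hg.continuous_fderiv one_ne_zero).comp (hΦcont_y y)).clm_apply continuous_const
      have hA'le : ∀ s, ‖A' s‖ ≤ ‖iteratedFDeriv ℝ (k+1) f (Phi N (s, y))‖ := by
        intro s
        calc ‖A' s‖ ≤ ‖fderiv ℝ (iteratedFDeriv ℝ k f) (Phi N (s, y))‖ * ‖v‖ :=
              ContinuousLinearMap.le_opNorm _ _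
          _ = ‖iteratedFDeriv ℝ (k+1) f (Phi N (s, y))‖ := by
              rw [hvnorm, mul_one, norm_fderiv_iteratedFDeriv]
      have hA1 : A 1 = 0 := by
        apply hvanish
        calc (1:ℝ) = |(1:ℝ)| := by norm_num
          _ ≤ _ := hnorm_ge y 1
      have hAm1 : A (-1) = 0 := by
        apply hvanish
        calc (1:ℝ) = |(-1:ℝ)| := by norm_num
          _ ≤ _ := hnorm_ge y (-1)
      have hbp : ∀ t ∈ Ioc (0:ℝ) 1,
          ‖iteratedFDeriv ℝ k f (Phi N (t, y))‖
            ≤ ∫ s in t..(1:ℝ), ‖iteratedFDeriv ℝ (k+1) f (Phi N (s, y))‖ := by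
        intro t ht
        calc ‖iteratedFDeriv ℝ k f (Phi N (t, y))‖
            ≤ ∫ s in t..(1:ℝ), ‖A' s‖ :=
              norm_le_intervalIntegral_right hAd hA'c ht.2 hA1
          _ ≤ ∫ s in t..(1:ℝ), ‖iteratedFDeriv ℝ (k+1) f (Phi N (s, y))‖ :=
              intervalIntegral.integral_mono_on ht.2
                (hA'c.norm.intervalIntegrable _ _) (hch.intervalIntegrable _ _)
                (fun s _ => hA'le s)
      have hbn : ∀ t ∈ Ico (-1:ℝ) 0,
          ‖iteratedFDeriv ℝ k f (Phi N (t, y))‖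
            ≤ ∫ s in (-1:ℝ)..t, ‖iteratedFDeriv ℝ (k+1) f (Phi N (s, y))‖ := by
        intro t ht
        calc ‖iteratedFDeriv ℝ k f (Phi N (t, y))‖
            ≤ ∫ s in (-1:ℝ)..t, ‖A' s‖ :=
              norm_le_intervalIntegral_left hAd hA'c ht.1 hAm1
          _ ≤ ∫ s in (-1:ℝ)..t, ‖iteratedFDeriv ℝ (k+1) f (Phi N (s, y))‖ :=
              intervalIntegral.integral_mono_on ht.1
                (hA'c.norm.intervalIntegrable _ _) (hch.intervalIntegrable _ _)
                (fun s _ => hA'le s)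
      have hvan : ∀ t : ℝ, 1 ≤ |t| → ‖iteratedFDeriv ℝ k f (Phi N (t, y))‖ = 0 := by
        intro t hti
        rw [hvanish k _ (hti.trans (hnorm_ge y t)), norm_zero]
      have step := hardy_line (p := p) (a := (k:ℝ) * p) hp
          (mul_nonneg (Nat.cast_nonneg k) hp0.le)
          hcu hch (fun t => norm_nonneg _) (fun t => norm_nonneg _) hbp hbn hvan
      have hexp : ∀ t : ℝ, |t| ^ (p + (k:ℝ) * p) = |t| ^ (((k+1:ℕ):ℝ) * p) := by
        intro t
        congr 1
        push_cast
        ring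
      calc (∫⁻ t : ℝ, ENNReal.ofReal (‖iteratedFDeriv ℝ 0 f (Phi N (t, y))‖ ^ p))
          ≤ (ENNReal.ofReal (p ^ p)) ^ k *
            ∫⁻ t : ℝ, ENNReal.ofReal (|t| ^ ((k:ℝ) * p) *
              ‖iteratedFDeriv ℝ k f (Phi N (t, y))‖ ^ p) := ih hk
        _ ≤ (ENNReal.ofReal (p ^ p)) ^ k *
            (ENNReal.ofReal (p ^ p) *
              ∫⁻ t : ℝ, ENNReal.ofReal (|t| ^ (p + (k:ℝ) * p) *
                ‖iteratedFDeriv ℝ (k+1) f (Phi N (t, y))‖ ^ p)) :=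
            mul_le_mul_right step _
        _ = (ENNReal.ofReal (p ^ p)) ^ (k+1) *
            ∫⁻ t : ℝ, ENNReal.ofReal (|t| ^ (((k+1:ℕ):ℝ) * p) *
              ‖iteratedFDeriv ℝ (k+1) f (Phi N (t, y))‖ ^ p) := by
            simp_rw [hexp]
            rw [pow_succ]
            ring
  -- transfer to product coordinates
  have transfer : ∀ (G : EuclideanSpace ℝ (Fin (N+1)) → ℝ≥0∞), Measurable G →
      ∫⁻ x, G x = ∫⁻ y : Fin N → ℝ, ∫⁻ t : ℝ, G (Phi N (t, y)) := by
    intro G hG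
    rw [← hΦmp.lintegral_comp_emb hΦemb G, Measure.volume_eq_prod]
    exact lintegral_prod_symm (fun z => G (Phi N z))
      ((hG.comp (Phi N).measurable).aemeasurable)
  -- the weight function
  set W : EuclideanSpace ℝ (Fin (N+1)) → ℝ :=
    fun x => ‖x‖ ^ ((m:ℝ) * p) * (1 + |Real.log ‖x‖|) ^ (σ * p) *
      ‖iteratedFDeriv ℝ m f x‖ ^ p with hWdef
  have hWx : ∀ x, W x = ‖x‖ ^ ((m:ℝ) * p) * (1 + |Real.log ‖x‖|) ^ (σ * p) *
      ‖iteratedFDeriv ℝ m f x‖ ^ p := fun x => rfl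
  have hWnn : ∀ x, 0 ≤ W x := by
    intro x; rw [hWx]; positivity
  have hmW : Measurable W := by
    have h1 : Measurable fun x : EuclideanSpace ℝ (Fin (N+1)) => ‖x‖ ^ ((m:ℝ) * p) :=
      ((Real.continuous_rpow_const (mul_nonneg (Nat.cast_nonneg m) hp0.le)).comp
        continuous_norm).measurable
    have h2 : Measurable fun x : EuclideanSpace ℝ (Fin (N+1)) =>
        (1 + |Real.log ‖x‖|) ^ (σ * p) :=
      (Real.continuous_rpow_const (mul_nonneg hσ.le hp0.le)).measurable.comp
        (measurable_const.add
          (continuous_abs.measurable.comp (Real.measurable_log.comp measurable_norm)))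
    have h3 : Measurable fun x : EuclideanSpace ℝ (Fin (N+1)) =>
        ‖iteratedFDeriv ℝ m f x‖ ^ p :=
      ((Real.continuous_rpow_const hp0.le).comp
        (hf.continuous_iteratedFDeriv le_rfl).norm).measurable
    exact (h1.mul h2).mul h3
  set B : ℝ≥0∞ := ∫⁻ x, ENNReal.ofReal (W x) with hB
  -- finiteness of B
  have hgcont : Continuous fun x : EuclideanSpace ℝ (Fin (N+1)) =>
      ‖iteratedFDeriv ℝ m f x‖ ^ p :=
    (Real.continuous_rpow_const hp0.le).comp (hf.continuous_iteratedFDeriv le_rfl).norm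
  have hgint : Integrable (fun x : EuclideanSpace ℝ (Fin (N+1)) =>
      ‖iteratedFDeriv ℝ m f x‖ ^ p) := by
    apply hgcont.integrable_of_hasCompactSupport
    have hcs := (hsupp.iteratedFDeriv m).comp_left
      (g := fun z : (EuclideanSpace ℝ (Fin (N+1)) [×m]→L[ℝ] ℝ) => ‖z‖ ^ p)
      (by simp [Real.zero_rpow hp0.ne'])
    exact hcs
  set ε : ℝ := (m:ℝ) / (2*σ) with hε
  have hm0 : (0:ℝ) < (m:ℝ) := by exact_mod_cast hm
  have hε0 : 0 < ε := div_pos hm0 (by linarith)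
  set Cw : ℝ := (1 + ε⁻¹) ^ (σ*p) with hCw
  have hCw0 : (0:ℝ) ≤ Cw := Real.rpow_nonneg (by positivity) _
  have hmp0 : (0:ℝ) < (m:ℝ) * p := mul_pos hm0 hp0
  have hwb : ∀ x, W x ≤ Cw * ‖iteratedFDeriv ℝ m f x‖ ^ p := by
    intro x
    rcases le_or_gt 1 ‖x‖ with hx1 | hx1
    · rw [hWx, hvanish m x hx1]
      simp [Real.zero_rpow hp0.ne']
    · rcases eq_or_ne x 0 with rfl | hx0
      · rw [hWx, norm_zero, Real.zero_rpow hmp0.ne', zero_mul, zero_mul]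
        positivity
      · have hn0 : 0 < ‖x‖ := norm_pos_iff.2 hx0
        have hlog : |Real.log ‖x‖| ≤ ε⁻¹ * ‖x‖ ^ (-ε) := by
          have hlt : Real.log ‖x‖ < 0 := Real.log_neg hn0 hx1
          rw [abs_of_neg hlt, ← Real.log_inv]
          calc Real.log ‖x‖⁻¹ = ε⁻¹ * Real.log ((‖x‖⁻¹) ^ ε) := by
                rw [Real.log_rpow (inv_pos.2 hn0), ← mul_assoc, inv_mul_cancel₀ hε0.ne',
                  one_mul]
            _ ≤ ε⁻¹ * ((‖x‖⁻¹) ^ ε) := by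
                refine mul_le_mul_of_nonneg_left ?_ (inv_nonneg.2 hε0.le)
                have h2 := Real.log_le_sub_one_of_pos
                  (Real.rpow_pos_of_pos (inv_pos.2 hn0) ε)
                linarith
            _ = ε⁻¹ * ‖x‖ ^ (-ε) := by
                rw [Real.inv_rpow hn0.le, ← Real.rpow_neg hn0.le]
        have h1r : (1:ℝ) ≤ ‖x‖ ^ (-ε) :=
          Real.one_le_rpow_of_pos_of_le_one_of_nonpos hn0 hx1.le (neg_nonpos.2 hε0.le)
        have hwl : (1 + |Real.log ‖x‖|) ^ (σ*p) ≤ Cw * ‖x‖ ^ (-ε * (σ*p)) := by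
          have hle : 1 + |Real.log ‖x‖| ≤ (1 + ε⁻¹) * ‖x‖ ^ (-ε) := by
            have hinv : (0:ℝ) ≤ ε⁻¹ := inv_nonneg.2 hε0.le
            nlinarith [hlog, h1r]
          calc (1 + |Real.log ‖x‖|) ^ (σ*p)
              ≤ ((1 + ε⁻¹) * ‖x‖ ^ (-ε)) ^ (σ*p) :=
                Real.rpow_le_rpow (by positivity) hle (mul_nonneg hσ.le hp0.le)
            _ = Cw * (‖x‖ ^ (-ε)) ^ (σ*p) :=
                Real.mul_rpow (by positivity) (Real.rpow_nonneg hn0.le _)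
            _ = Cw * ‖x‖ ^ (-ε * (σ*p)) := by rw [← Real.rpow_mul hn0.le]
        have hexp2 : (m:ℝ)*p + (-ε * (σ*p)) = (m:ℝ)*p/2 := by
          rw [hε]
          field_simp
          ring
        calc W x = ‖x‖ ^ ((m:ℝ)*p) * (1 + |Real.log ‖x‖|) ^ (σ*p) *
              ‖iteratedFDeriv ℝ m f x‖ ^ p := hWx x
          _ ≤ ‖x‖ ^ ((m:ℝ)*p) * (Cw * ‖x‖ ^ (-ε * (σ*p))) *
              ‖iteratedFDeriv ℝ m f x‖ ^ p := by
              refine mul_le_mul_of_nonneg_right ?_ (Real.rpow_nonneg (norm_nonneg _) _)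
              exact mul_le_mul_of_nonneg_left hwl (Real.rpow_nonneg (norm_nonneg _) _)
          _ = Cw * (‖x‖ ^ ((m:ℝ)*p) * ‖x‖ ^ (-ε * (σ*p))) *
              ‖iteratedFDeriv ℝ m f x‖ ^ p := by ring
          _ = Cw * ‖x‖ ^ ((m:ℝ)*p/2) * ‖iteratedFDeriv ℝ m f x‖ ^ p := by
              rw [← Real.rpow_add hn0, hexp2]
          _ ≤ Cw * 1 * ‖iteratedFDeriv ℝ m f x‖ ^ p := by
              refine mul_le_mul_of_nonneg_right ?_ (Real.rpow_nonneg (norm_nonneg _) _)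
              exact mul_le_mul_of_nonneg_left
                (Real.rpow_le_one hn0.le hx1.le (by positivity)) hCw0
          _ = Cw * ‖iteratedFDeriv ℝ m f x‖ ^ p := by ring
  have hBle : B ≤ ENNReal.ofReal Cw *
      ∫⁻ x, ENNReal.ofReal (‖iteratedFDeriv ℝ m f x‖ ^ p) := by
    calc B ≤ ∫⁻ x, ENNReal.ofReal (Cw * ‖iteratedFDeriv ℝ m f x‖ ^ p) :=
          lintegral_mono fun x => ENNReal.ofReal_le_ofReal (hwb x)
      _ = ∫⁻ x, ENNReal.ofReal Cw * ENNReal.ofReal (‖iteratedFDeriv ℝ m f x‖ ^ p) := by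
          simp_rw [ENNReal.ofReal_mul hCw0]
      _ = ENNReal.ofReal Cw * ∫⁻ x, ENNReal.ofReal (‖iteratedFDeriv ℝ m f x‖ ^ p) :=
          lintegral_const_mul' _ _ ENNReal.ofReal_ne_top
  have hBfin : B ≠ ⊤ := by
    refine ne_of_lt (lt_of_le_of_lt hBle ?_)
    exact ENNReal.mul_lt_top ENNReal.ofReal_lt_top hgint.lintegral_lt_top
  -- pointwise comparison with the weight
  have hJL : (0:ℝ) < (J:ℝ) * Real.log 2 := mul_pos hJ0 hl2
  have hpoint : ∀ (y : Fin N → ℝ) (t : ℝ),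
      |t| ^ ((m:ℝ)*p) * ‖iteratedFDeriv ℝ m f (Phi N (t, y))‖ ^ p
        ≤ ((J:ℝ) * Real.log 2) ^ (-(σ*p)) * W (Phi N (t, y)) := by
    intro y t
    rcases eq_or_ne (iteratedFDeriv ℝ m f (Phi N (t, y))) 0 with hD | hD
    · rw [hD, norm_zero, Real.zero_rpow hp0.ne', mul_zero]
      exact mul_nonneg (Real.rpow_nonneg hJL.le _) (hWnn _)
    · have hxs : Phi N (t, y) ∈ tsupport (iteratedFDeriv ℝ m f) :=
        subset_closure (Function.mem_support.2 hD)
      have hxb : ‖Phi N (t, y)‖ < r :=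
        mem_ball_zero_iff.1 (hball (tsupport_iteratedFDeriv_subset m hxs))
      rcases eq_or_ne (Phi N (t, y)) 0 with hx0 | hx0
      · have ht0 : |t| = 0 := le_antisymm
          (by calc |t| ≤ ‖Phi N (t, y)‖ := hnorm_ge y t
                _ = 0 := by rw [hx0, norm_zero]) (abs_nonneg t)
        rw [ht0, Real.zero_rpow hmp0.ne', zero_mul]
        exact mul_nonneg (Real.rpow_nonneg hJL.le _) (hWnn _)
      · have hn0 : 0 < ‖Phi N (t, y)‖ := norm_pos_iff.2 hx0
        have hlog2 : (J:ℝ) * Real.log 2 ≤ 1 + |Real.log ‖Phi N (t, y)‖| := by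
          have h1 : Real.log ‖Phi N (t, y)‖ ≤ -((J:ℝ) * Real.log 2) := by
            have h2 : Real.log ‖Phi N (t, y)‖ ≤ Real.log r :=
              (Real.log_le_log_iff hn0 hr0).2 hxb.le
            rw [hr, Real.log_rpow two_pos] at h2
            linarith
          calc (J:ℝ) * Real.log 2 ≤ -Real.log ‖Phi N (t, y)‖ := by linarith
            _ ≤ |Real.log ‖Phi N (t, y)‖| := neg_le_abs _
            _ ≤ 1 + |Real.log ‖Phi N (t, y)‖| := by
                linarith [abs_nonneg (Real.log ‖Phi N (t, y)‖)]
        have hWge : ((J:ℝ) * Real.log 2) ^ (σ*p)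
            ≤ (1 + |Real.log ‖Phi N (t, y)‖|) ^ (σ*p) :=
          Real.rpow_le_rpow hJL.le hlog2 (mul_nonneg hσ.le hp0.le)
        have h1 : |t| ^ ((m:ℝ)*p) * ‖iteratedFDeriv ℝ m f (Phi N (t, y))‖ ^ p
            ≤ ‖Phi N (t, y)‖ ^ ((m:ℝ)*p) * ‖iteratedFDeriv ℝ m f (Phi N (t, y))‖ ^ p :=
          mul_le_mul_of_nonneg_right
            (Real.rpow_le_rpow (abs_nonneg t) (hnorm_ge y t)
              (mul_nonneg (Nat.cast_nonneg m) hp0.le))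
            (Real.rpow_nonneg (norm_nonneg _) _)
        refine h1.trans ?_
        have h2 : ‖Phi N (t, y)‖ ^ ((m:ℝ)*p) * ‖iteratedFDeriv ℝ m f (Phi N (t, y))‖ ^ p
            = ((J:ℝ)*Real.log 2) ^ (-(σ*p)) * (((J:ℝ)*Real.log 2) ^ (σ*p) *
              (‖Phi N (t, y)‖ ^ ((m:ℝ)*p) *
                ‖iteratedFDeriv ℝ m f (Phi N (t, y))‖ ^ p)) := by
          rw [← mul_assoc, ← Real.rpow_add hJL]
          norm_num
        rw [h2]
        refine mul_le_mul_of_nonneg_left ?_ (Real.rpow_nonneg hJL.le _)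
        calc ((J:ℝ)*Real.log 2) ^ (σ*p) * (‖Phi N (t, y)‖ ^ ((m:ℝ)*p) *
              ‖iteratedFDeriv ℝ m f (Phi N (t, y))‖ ^ p)
            ≤ (1 + |Real.log ‖Phi N (t, y)‖|) ^ (σ*p) * (‖Phi N (t, y)‖ ^ ((m:ℝ)*p) *
              ‖iteratedFDeriv ℝ m f (Phi N (t, y))‖ ^ p) :=
              mul_le_mul_of_nonneg_right hWge (by positivity)
          _ = W (Phi N (t, y)) := by rw [hWx]; ring
  -- the main estimate, in ℝ≥0∞
  have hG1 : Measurable fun x : EuclideanSpace ℝ (Fin (N+1)) =>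
      ENNReal.ofReal (|f x| ^ p) :=
    (((Real.continuous_rpow_const hp0.le).comp hf.continuous.abs).measurable).ennreal_ofReal
  have key : ∫⁻ x, ENNReal.ofReal (|f x| ^ p)
      ≤ (ENNReal.ofReal (p ^ p)) ^ m *
        ENNReal.ofReal (((J:ℝ) * Real.log 2) ^ (-(σ*p))) * B := by
    calc ∫⁻ x, ENNReal.ofReal (|f x| ^ p)
        = ∫⁻ y : Fin N → ℝ, ∫⁻ t : ℝ, ENNReal.ofReal (|f (Phi N (t, y))| ^ p) :=
          transfer _ hG1
      _ = ∫⁻ y : Fin N → ℝ, ∫⁻ t : ℝ,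
            ENNReal.ofReal (‖iteratedFDeriv ℝ 0 f (Phi N (t, y))‖ ^ p) := by
          refine lintegral_congr fun y => lintegral_congr fun t => ?_
          rw [norm_iteratedFDeriv_zero, Real.norm_eq_abs]
      _ ≤ ∫⁻ y : Fin N → ℝ, (ENNReal.ofReal (p ^ p)) ^ m *
            ∫⁻ t : ℝ, ENNReal.ofReal (|t| ^ ((m:ℝ)*p) *
              ‖iteratedFDeriv ℝ m f (Phi N (t, y))‖ ^ p) :=
          lintegral_mono fun y => chain y m le_rfl
      _ ≤ ∫⁻ y : Fin N → ℝ, (ENNReal.ofReal (p ^ p)) ^ m *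
            (ENNReal.ofReal (((J:ℝ)*Real.log 2) ^ (-(σ*p))) *
              ∫⁻ t : ℝ, ENNReal.ofReal (W (Phi N (t, y)))) := by
          refine lintegral_mono fun y => mul_le_mul_right ?_ _
          rw [← lintegral_const_mul' _ _ ENNReal.ofReal_ne_top]
          refine lintegral_mono fun t => ?_
          rw [← ENNReal.ofReal_mul (Real.rpow_nonneg hJL.le _)]
          exact ENNReal.ofReal_le_ofReal (hpoint y t)
      _ = (ENNReal.ofReal (p ^ p)) ^ m *
            ENNReal.ofReal (((J:ℝ)*Real.log 2) ^ (-(σ*p))) *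
            ∫⁻ y : Fin N → ℝ, ∫⁻ t : ℝ, ENNReal.ofReal (W (Phi N (t, y))) := by
          simp_rw [← mul_assoc]
          exact lintegral_const_mul' _ _
            (ENNReal.mul_ne_top (ENNReal.pow_ne_top ENNReal.ofReal_ne_top)
              ENNReal.ofReal_ne_top)
      _ = (ENNReal.ofReal (p ^ p)) ^ m *
            ENNReal.ofReal (((J:ℝ)*Real.log 2) ^ (-(σ*p))) * B := by
          rw [hB, transfer _ hmW.ennreal_ofReal]
  -- back to real integrals
  have hLf : ∫ x, |f x| ^ p = (∫⁻ x, ENNReal.ofReal (|f x| ^ p)).toReal :=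
    integral_eq_lintegral_of_nonneg_ae
      (ae_of_all _ fun x => Real.rpow_nonneg (abs_nonneg _) _)
      ((Real.continuous_rpow_const hp0.le).comp hf.continuous.abs).aestronglyMeasurable
  have hTW : ∫ x, W x = B.toReal := by
    rw [hB]
    exact integral_eq_lintegral_of_nonneg_ae (ae_of_all _ hWnn) hmW.aestronglyMeasurable
  have hKne : (ENNReal.ofReal (p ^ p)) ^ m *
      ENNReal.ofReal (((J:ℝ)*Real.log 2) ^ (-(σ*p))) ≠ ⊤ :=
    ENNReal.mul_ne_top (ENNReal.pow_ne_top ENNReal.ofReal_ne_top) ENNReal.ofReal_ne_top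
  have hmain : ∫ x, |f x| ^ p
      ≤ (p^p)^m * ((J:ℝ)*Real.log 2) ^ (-(σ*p)) * (∫ x, W x) := by
    rw [hLf, hTW]
    have h2 := ENNReal.toReal_mono (ENNReal.mul_ne_top hKne hBfin) key
    rwa [ENNReal.toReal_mul, ENNReal.toReal_mul, ENNReal.toReal_pow,
      ENNReal.toReal_ofReal (Real.rpow_nonneg hp0.le _),
      ENNReal.toReal_ofReal (Real.rpow_nonneg hJL.le _)] at h2
  -- final algebra with rpow
  have hTnn : 0 ≤ ∫ x, W x := by rw [hTW]; exact ENNReal.toReal_nonneg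
  have hLnn : 0 ≤ ∫ x, |f x| ^ p := by rw [hLf]; exact ENNReal.toReal_nonneg
  have h3 : (∫ x, |f x| ^ p) ^ (1/p)
      ≤ ((p^p)^m * ((J:ℝ)*Real.log 2) ^ (-(σ*p)) * (∫ x, W x)) ^ (1/p) :=
    Real.rpow_le_rpow hLnn hmain (one_div_nonneg.2 hp0.le)
  have e1 : ((p^p)^m : ℝ) ^ (1/p) = p ^ m := by
    rw [← Real.rpow_natCast (p^p) m, ← Real.rpow_mul hp0.le, ← Real.rpow_mul hp0.le,
      show p * (m:ℝ) * (1/p) = (m:ℝ) by field_simp,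
      Real.rpow_natCast]
  have e2 : (((J:ℝ)*Real.log 2) ^ (-(σ*p))) ^ (1/p)
      = (J:ℝ) ^ (-σ) * (Real.log 2) ^ (-σ) := by
    rw [← Real.rpow_mul hJL.le, show -(σ*p) * (1/p) = -σ by field_simp,
      Real.mul_rpow hJ0.le hl2.le]
  have hsimp : ((p^p)^m * ((J:ℝ)*Real.log 2) ^ (-(σ*p)) * (∫ x, W x)) ^ (1/p)
      = p ^ m * Real.log 2 ^ (-σ) * (J:ℝ) ^ (-σ) * (∫ x, W x) ^ (1/p) := by
    rw [Real.mul_rpow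
        (mul_nonneg (pow_nonneg (Real.rpow_nonneg hp0.le _) m) (Real.rpow_nonneg hJL.le _))
        hTnn,
      Real.mul_rpow (pow_nonneg (Real.rpow_nonneg hp0.le _) m) (Real.rpow_nonneg hJL.le _),
      e1, e2]
    ring
  calc (∫ x, |f x| ^ p) ^ (1/p)
      ≤ p ^ m * Real.log 2 ^ (-σ) * (J:ℝ) ^ (-σ) * (∫ x, W x) ^ (1/p) := h3.trans_eq hsimp
    _ = p ^ m * Real.log 2 ^ (-σ) * (J:ℝ) ^ (-σ) * (∫ x, W x) ^ (1/p) := rfl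
end
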